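/- Let α ∈ F_{q^2} \ F_q and let s ∈ PGL(2,q) satisfy s(α) = α^q. Then s is an involution (s has order 2). -/
import Mathlib


open Matrix Polynomial
open scoped LinearAlgebra.Projectivization MatrixGroups Pointwise

namespace PaperPGL

section Defs

variable (F : Type*) [Field F]

lemma glInj (g : GL (Fin 2) F) :
    Function.Injective ((g : Matrix (Fin 2) (Fin 2) F).mulVecLin) := by
  intro x y h
  have h2 := congrArg ((↑g⁻¹ : Matrix (Fin 2) (Fin 2) F).mulVecLin) h
  simp only [Matrix.mulVecLin_apply, Matrix.mulVec_mulVec] at h2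
  rw [← Matrix.GeneralLinearGroup.coe_mul, inv_mul_cancel] at h2
  simpa using h2

noncomputable instance : MulAction (GL (Fin 2) F) (ℙ F (Fin 2 → F)) where
  smul g x := Projectivization.map ((g : Matrix (Fin 2) (Fin 2) F).mulVecLin) (glInj F g) x
  one_smul x := by
    show Projectivization.map _ _ x = x
    have h1 : ((1 : GL (Fin 2) F) : Matrix (Fin 2) (Fin 2) F).mulVecLin
        = (LinearMap.id : (Fin 2 → F) →ₗ[F] (Fin 2 → F)) := by
      rw [Matrix.GeneralLinearGroup.coe_one, Matrix.mulVecLin_one]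
    simp only [h1]
    rw [Projectivization.map_id]
    rfl
  mul_smul g h x := by
    show Projectivization.map _ _ x = Projectivization.map _ _ (Projectivization.map _ _ x)
    have h1 : ((g * h : GL (Fin 2) F) : Matrix (Fin 2) (Fin 2) F).mulVecLin
        = ((g : Matrix (Fin 2) (Fin 2) F).mulVecLin).comp
          ((h : Matrix (Fin 2) (Fin 2) F).mulVecLin) := by
      rw [← Matrix.mulVecLin_mul, ← Matrix.GeneralLinearGroup.coe_mul]
    simp only [h1]
    rw [Projectivization.map_comp]
    rfl

/-- The image of `GL(2,F)` in the permutations of the projective line: `PGL(2,F)`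
acting faithfully on `ℙ¹(F)`. -/
noncomputable def toPGL : GL (Fin 2) F →* Equiv.Perm (ℙ F (Fin 2 → F)) :=
  MulAction.toPermHom _ _

/-- `PGL(2,F)` as a subgroup of the permutation group of the projective line `ℙ¹(F)`. -/
noncomputable def pgl : Subgroup (Equiv.Perm (ℙ F (Fin 2 → F))) :=
  (toPGL F).range

/-- Entrywise base change `GL(2,F) →* GL(2,K)` along a ring hom. -/
noncomputable def baseChange (F K : Type*) [Field F] [Field K] (phi : F →+* K) :
    GL (Fin 2) F →* GL (Fin 2) K :=
  Units.map phi.mapMatrix.toMonoidHom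

lemma mulVec_ne {g : GL (Fin 2) F} {v : Fin 2 → F} (hv : v ≠ 0) :
    (g : Matrix (Fin 2) (Fin 2) F).mulVec v ≠ 0 := by
  intro h
  exact hv (glInj F g (by simpa using h))

lemma smul_mk (g : GL (Fin 2) F) (v : Fin 2 → F) (hv : v ≠ 0) :
    g • Projectivization.mk F v hv
      = Projectivization.mk F ((g : Matrix (Fin 2) (Fin 2) F).mulVec v) (mulVec_ne F hv) := by
  show Projectivization.map _ (glInj F g) _ = _
  rw [Projectivization.map_mk]
  rfl

lemma toPGL_apply (g : GL (Fin 2) F) (x : ℙ F (Fin 2 → F)) : toPGL F g x = g • x := rfl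
end Defs

/-- If `α ∈ F_{q^2} \\ F_q` and `s ∈ PGL(2,q)` satisfies `s(α) = α^q`, then `s` is an
involution. -/
theorem stmt19 (Fq : Type*) [Field Fq] [Fintype Fq] (q : ℕ) (hq : Fintype.card Fq = q)
    (K : Type*) [Field K] [Algebra Fq K] [IsAlgClosure Fq K]
    (α : K) (hα2 : α ^ q ^ 2 = α) (hα1 : α ^ q ≠ α)
    (m : GL (Fin 2) Fq)
    (heq : algebraMap Fq K (m.val 1 0) * α ^ (q + 1) + algebraMap Fq K (m.val 1 1) * α ^ q
      = algebraMap Fq K (m.val 0 0) * α + algebraMap Fq K (m.val 0 1)) :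
    orderOf (toPGL Fq m) = 2 := by
  set φ := algebraMap Fq K with hφ
  have hφinj : Function.Injective φ := (algebraMap Fq K).injective
  obtain ⟨n, hp, hcard⟩ := FiniteField.card Fq (ringChar Fq)
  haveI : CharP K (ringChar Fq) := charP_of_injective_algebraMap hφinj (ringChar Fq)
  haveI : Fact (Nat.Prime (ringChar Fq)) := ⟨hp⟩
  have hqpow : q = ringChar Fq ^ (n : ℕ) := by rw [← hq, hcard]
  have hadd : ∀ x y : K, (x + y) ^ q = x ^ q + y ^ q := by
    intro x y; rw [hqpow]; exact add_pow_char_pow x y (ringChar Fq) (↑n)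
  have hfix : ∀ r : Fq, (φ r) ^ q = φ r := by
    intro r; rw [← map_pow, ← hq, FiniteField.pow_card]
  rw [pow_succ] at heq
  set a := m.val 0 0 with ha
  set b := m.val 0 1 with hb
  set c := m.val 1 0 with hc
  set d := m.val 1 1 with hd
  set β := α ^ q with hβ
  have hβq : β ^ q = α := by rw [hβ, ← pow_mul, ← pow_two, hα2]
  have hne : α ≠ β := fun h => hα1 h.symm
  have heq1 : φ c * (β * α) + φ d * β = φ a * α + φ b := heq
  have heq2 : φ c * (α * β) + φ d * α = φ a * β + φ b := by
    have h := congrArg (· ^ q) heq1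
    rw [hadd, hadd, mul_pow, mul_pow, mul_pow, mul_pow] at h
    rw [hfix, hfix, hfix, hfix, hβq, ← hβ] at h
    exact h
  set M : Matrix (Fin 2) (Fin 2) K := (m.val).map φ with hM
  set v1 : Fin 2 → K := ![α, 1] with hv1def
  set v2 : Fin 2 → K := ![β, 1] with hv2def
  have hv1 : M.mulVec v1 = (φ c * α + φ d) • v2 := by
    funext i
    fin_cases i <;>
      simp only [hM, hv1def, hv2def, Matrix.mulVec, dotProduct, Fin.sum_univ_two,
        Matrix.map_apply, Fin.zero_eta, Fin.mk_one, Matrix.cons_val_zero, Matrix.cons_val_one,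
        Matrix.head_cons, Pi.smul_apply, smul_eq_mul, Fin.isValue]
    · rw [← ha, ← hb, mul_one, ← heq1]; ring
    · rw [← hc, ← hd]; ring
  have hv2 : M.mulVec v2 = (φ c * β + φ d) • v1 := by
    funext i
    fin_cases i <;>
      simp only [hM, hv1def, hv2def, Matrix.mulVec, dotProduct, Fin.sum_univ_two,
        Matrix.map_apply, Fin.zero_eta, Fin.mk_one, Matrix.cons_val_zero, Matrix.cons_val_one,
        Matrix.head_cons, Pi.smul_apply, smul_eq_mul, Fin.isValue]
    · rw [← ha, ← hb, mul_one, ← heq2]; ring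
    · rw [← hc, ← hd]; ring
  set lam := (φ c * α + φ d) * (φ c * β + φ d) with hlam
  have hMM1 : (M * M).mulVec v1 = lam • v1 := by
    rw [← Matrix.mulVec_mulVec, hv1, Matrix.mulVec_smul, hv2, smul_smul, hlam]
  have hMM2 : (M * M).mulVec v2 = lam • v2 := by
    rw [← Matrix.mulVec_mulVec, hv2, Matrix.mulVec_smul, hv1, smul_smul, hlam, mul_comm]
  -- entrywise equations
  have e1 := congrFun hMM1
  have e2 := congrFun hMM2
  simp only [Matrix.mulVec, dotProduct, Fin.sum_univ_two, hv1def, hv2def,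
    Matrix.cons_val_zero, Matrix.cons_val_one, Matrix.head_cons,
    Pi.smul_apply, smul_eq_mul] at e1 e2
  have e10 := e1 0
  have e11 := e1 1
  have e20 := e2 0
  have e21 := e2 1
  simp only [Matrix.cons_val_zero, Matrix.cons_val_one, Matrix.head_cons, mul_one] at e10 e11 e20 e21
  have hsub : α - β ≠ 0 := sub_ne_zero.mpr hne
  have hN00 : (M * M) 0 0 = lam := by
    have : ((M * M) 0 0 - lam) * (α - β) = 0 := by linear_combination e10 - e20
    rcases mul_eq_zero.mp this with h | h
    · exact sub_eq_zero.mp h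
    · exact absurd h hsub
  have hN01 : (M * M) 0 1 = 0 := by linear_combination e10 - hN00 * α
  have hN10 : (M * M) 1 0 = 0 := by
    have : (M * M) 1 0 * (α - β) = 0 := by linear_combination e11 - e21
    rcases mul_eq_zero.mp this with h | h
    · exact h
    · exact absurd h hsub
  have hN11 : (M * M) 1 1 = lam := by linear_combination e11 - hN10 * α
  -- transfer to m ^ 2
  have hNφ : ∀ i j, (M * M) i j = φ ((m ^ 2).val i j) := by
    intro i j
    rw [hM, ← Matrix.map_mul]
    have : (m ^ 2).val = m.val * m.val := by
      rw [Units.val_pow_eq_pow_val, sq]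
    rw [this]
    rfl
  set t := (m ^ 2).val 0 0 with ht
  have hb0 : (m ^ 2).val 0 1 = 0 := hφinj (by rw [← hNφ, hN01, map_zero])
  have hc0 : (m ^ 2).val 1 0 = 0 := hφinj (by rw [← hNφ, hN10, map_zero])
  have hd0 : (m ^ 2).val 1 1 = t := hφinj (by rw [← hNφ, hN11, ← hN00, hNφ])
  have htne : t ≠ 0 := by
    intro h0
    have hu : IsUnit (m ^ 2).val.det := (Matrix.isUnit_iff_isUnit_det _).mp (m ^ 2).isUnit
    rw [Matrix.det_fin_two, hb0, hc0, hd0, h0] at hu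
    simp at hu
  -- m^2 acts trivially
  have hmsq : ∀ v : Fin 2 → Fq, (m ^ 2).val.mulVec v = t • v := by
    intro v
    funext i
    fin_cases i <;>
      simp [Matrix.mulVec, dotProduct, Fin.sum_univ_two, ← Units.val_pow_eq_pow_val,
        hb0, hc0, hd0, ← ht, mul_comm]
  have hsq : (toPGL Fq m) ^ 2 = 1 := by
    rw [← map_pow]
    ext x
    induction x using Projectivization.ind with
    | h v hv =>
      rw [toPGL_apply, smul_mk, Equiv.Perm.coe_one, id_eq]
      rw [Projectivization.mk_eq_mk_iff']
      exact ⟨t, (hmsq v).symm⟩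
  have hne1 : toPGL Fq m ≠ 1 := by
    intro h
    have key : ∀ (v : Fin 2 → Fq) (hv : v ≠ 0), ∃ s : Fq, s • v = m.val.mulVec v := by
      intro v hv
      have hx := congrArg (fun σ : Equiv.Perm (ℙ Fq (Fin 2 → Fq)) => σ (Projectivization.mk Fq v hv)) h
      simp only [Equiv.Perm.coe_one, id_eq] at hx
      rw [toPGL_apply, smul_mk, Projectivization.mk_eq_mk_iff'] at hx
      exact hx
    have h10 : (![1, 0] : Fin 2 → Fq) ≠ 0 := fun h => one_ne_zero (congrFun h 0)
    have h01 : (![0, 1] : Fin 2 → Fq) ≠ 0 := fun h => one_ne_zero (congrFun h 1)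
    have h11 : (![1, 1] : Fin 2 → Fq) ≠ 0 := fun h => one_ne_zero (congrFun h 0)
    obtain ⟨s0, hs0⟩ := key _ h10
    obtain ⟨s1, hs1⟩ := key _ h01
    obtain ⟨s2, hs2⟩ := key _ h11
    have f00 := congrFun hs0 0
    have f01 := congrFun hs0 1
    have f10 := congrFun hs1 0
    have f11 := congrFun hs1 1
    have f20 := congrFun hs2 0
    have f21 := congrFun hs2 1
    simp only [Matrix.mulVec, dotProduct, Fin.sum_univ_two, Matrix.cons_val_zero,
      Matrix.cons_val_one, Matrix.head_cons, Pi.smul_apply, smul_eq_mul, mul_one, mul_zero,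
      add_zero, zero_add] at f00 f01 f10 f11 f20 f21
    rw [← ha] at f00; rw [← hc] at f01; rw [← hb] at f10; rw [← hd] at f11
    rw [← ha, ← hb] at f20; rw [← hc, ← hd] at f21
    have hcz : c = 0 := f01.symm
    have hbz : b = 0 := f10.symm
    have had : a = d := by
      have : s2 = a := by rw [f20, hbz, add_zero]
      have h2 : s2 = d := by rw [f21, hcz, zero_add]
      rw [← this, h2]
    have haz : a ≠ 0 := by
      intro h0
      have hu : IsUnit m.val.det := (Matrix.isUnit_iff_isUnit_det _).mp m.isUnit
      rw [Matrix.det_fin_two, ← ha, ← hb, ← hc, ← hd, hbz, hcz, had] at hu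
      rw [← had, h0] at hu
      simp at hu
    rw [hcz, hbz, ← had] at heq1
    simp only [map_zero, zero_mul, zero_add, add_zero] at heq1
    exact hα1 (mul_left_cancel₀ (fun h => haz (hφinj (by rw [h, map_zero])) : φ a ≠ 0) heq1)
  exact orderOf_eq_prime hsq hne1
end PaperPGL
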